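/- arXiv:2009.10575 — 2 statements merged into one kernel-verified Lean document; each statement's English description precedes it below -/
import Mathlib

section
/- Suppose a group G has a finite index subgroup H and an element h ∈ H of infinite order which is central in G. If there exists a group homomorphism θ : H → ℤ with θ(h) ≠ 0, then there exists a group homomorphism φ : G → ℤ with φ(h) ≠ 0. -/
/-! The transfer `G → H^ab` sends a central element `h` to `h ^ [G : H]`, so composing it with `θ`
gives `φ h = θ h ^ [G : H]`, which is nontrivial because `ℤ` is torsion-free. -/

open Subgroup

theorem MonoidHom.transfer_eq_pow_index_of_mem_center {G A : Type*} [Group G] [CommGroup A]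
    {H : Subgroup G} [H.FiniteIndex] (ϕ : H →* A) {g : G} (hg : g ∈ center G) (hgH : g ∈ H) :
    ϕ.transfer g = ϕ ⟨g, hgH⟩ ^ H.index := by
  rw [ϕ.transfer_eq_pow g fun k g₀ _ => by
    rw [mem_center_iff.mp (pow_mem hg k) g₀⁻¹, inv_mul_cancel_right], ← map_pow]
  rfl

theorem stmt0_general {G : Type*} [Group G] (H : Subgroup G) [H.FiniteIndex]
    (h : G) (hhH : h ∈ H) (hcen : h ∈ Subgroup.center G)
    (θ : H →* Multiplicative ℤ) (hθ : θ ⟨h, hhH⟩ ≠ 1) :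
    ∃ φ : G →* Multiplicative ℤ, φ h ≠ 1 := by
  refine ⟨θ.transfer, ?_⟩
  rw [θ.transfer_eq_pow_index_of_mem_center hcen hhH]
  exact fun hpow => hθ ((pow_eq_one_iff_left FiniteIndex.index_ne_zero).mp hpow)

/-- If a group `G` has a finite index subgroup `H` and an element `h ∈ H` of infinite
order which is central in `G`, and there is a homomorphism `θ : H → ℤ` with `θ h ≠ 0`,
then there is a homomorphism `φ : G → ℤ` with `φ h ≠ 0`. -/
theorem stmt0 {G : Type*} [Group G] (H : Subgroup G) [H.FiniteIndex]
    (h : G) (hhH : h ∈ H) (hord : ¬ IsOfFinOrder h) (hcen : h ∈ Subgroup.center G)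
    (θ : H →* Multiplicative ℤ) (hθ : θ ⟨h, hhH⟩ ≠ 1) :
    ∃ φ : G →* Multiplicative ℤ, φ h ≠ 1 :=
  stmt0_general H h hhH hcen θ hθ
end

section
/- Suppose a group G has a finite index subgroup H and an element h ∈ H of infinite order which is central in G. If the image of h in the abelianisation H/[H,H] has infinite order, then the image of h in the abelianisation G/[G,G] has infinite order. -/
/-!
Transfer `G → H^ab` along the finite index subgroup `H` factors through `G^ab`, and on a central
element `h ∈ H` it is `h ↦ h ^ [G : H]`. So if `h` has finite order in `G^ab`, then
`h ^ [G : H]`, and hence `h`, has finite order in `H^ab`.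
-/

namespace MonoidHom

theorem transfer_eq_pow_of_mem_center {G A : Type*} [Group G] [CommGroup A] {H : Subgroup G}
    [H.FiniteIndex] (ϕ : H →* A) {g : G} (hgH : g ∈ H) (hg : g ∈ Subgroup.center G) :
    transfer ϕ g = ϕ ⟨g, hgH⟩ ^ H.index := by
  have hconj (k : ℕ) (g₀ : G) : g₀⁻¹ * g ^ k * g₀ = g ^ k := by
    rw [mul_assoc, ← Subgroup.mem_center_iff.mp (Subgroup.pow_mem _ hg k) g₀, inv_mul_cancel_left]
  rw [transfer_eq_pow ϕ g fun k g₀ _ => hconj k g₀, ← map_pow]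
  rfl

end MonoidHom

theorem Abelianization.isOfFinOrder_of_subgroup_of_mem_center {G : Type*} [Group G]
    {H : Subgroup G} [H.FiniteIndex] {g : G} (hgH : g ∈ H) (hg : g ∈ Subgroup.center G)
    (hfin : IsOfFinOrder (of g)) : IsOfFinOrder (of (⟨g, hgH⟩ : H)) := by
  have hpow := (lift (MonoidHom.transfer (of : H →* Abelianization H))).isOfFinOrder hfin
  rw [lift_apply_of, MonoidHom.transfer_eq_pow_of_mem_center _ hgH hg] at hpow
  exact hpow.of_pow Subgroup.FiniteIndex.index_ne_zero

theorem stmt1_general {G : Type*} [Group G] (H : Subgroup G) [H.FiniteIndex]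
    (h : G) (hhH : h ∈ H) (hcen : h ∈ Subgroup.center G)
    (hab : ¬ IsOfFinOrder (Abelianization.of (⟨h, hhH⟩ : H))) :
    ¬ IsOfFinOrder (Abelianization.of h) :=
  fun hfin => hab (Abelianization.isOfFinOrder_of_subgroup_of_mem_center hhH hcen hfin)

/-- If a group `G` has a finite index subgroup `H` and an infinite order element `h ∈ H`
which is central in `G`, and the image of `h` in the abelianisation of `H` has infinite
order, then the image of `h` in the abelianisation of `G` has infinite order. -/
theorem stmt1 {G : Type*} [Group G] (H : Subgroup G) [H.FiniteIndex]
    (h : G) (hhH : h ∈ H) (hord : ¬ IsOfFinOrder h) (hcen : h ∈ Subgroup.center G)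
    (hab : ¬ IsOfFinOrder (Abelianization.of (⟨h, hhH⟩ : H))) :
    ¬ IsOfFinOrder (Abelianization.of h) :=
  stmt1_general H h hhH hcen hab
end
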